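/- arXiv:2001.09061 — 7 statements merged into one kernel-verified Lean document; each statement's English description precedes it below -/
import Mathlib

section
/- Let (X, μ) and (Y, ν) be probability spaces (measurable spaces with probability measures), let G : X → Y and F : Y → X be measurable maps forming an exact CycleGAN solution, and let φ : X → X be measurable with φ_*μ = μ and with a measurable map ψ : X → X satisfying ψ ∘ φ = id μ-almost everywhere and φ ∘ ψ = id μ-almost everywhere. Then the pair (G ∘ φ, ψ ∘ F) is again an exact CycleGAN solution, i.e. (G ∘ φ)_*μ = ν, (ψ ∘ F)_*ν = μ, (ψ ∘ F) ∘ (G ∘ φ) = id μ-almost everywhere, and (G ∘ φ) ∘ (ψ ∘ F) = id ν-almost everywhere. -/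
/-!
Exact CycleGAN solutions behave like isomorphisms of measure spaces modulo null sets, and they
compose. A measure-preserving `φ` with an a.e. two-sided inverse `ψ` is an exact solution from
`(X, μ)` to itself (`ψ` preserves `μ` automatically, since `ψ_* μ = ψ_* φ_* μ = (ψ ∘ φ)_* μ = μ`),
and `(G ∘ φ, ψ ∘ F)` is its composite with `(G, F)`.
-/

open MeasureTheory

structure IsExactCycleGAN {X Y : Type*} [MeasurableSpace X] [MeasurableSpace Y]
    (μ : Measure X) (ν : Measure Y) (G : X → Y) (F : Y → X) : Prop where
  measurable_forward : Measurable G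
  measurable_backward : Measurable F
  map_forward : μ.map G = ν
  map_backward : ν.map F = μ
  backward_comp_forward : F ∘ G =ᵐ[μ] id
  forward_comp_backward : G ∘ F =ᵐ[ν] id

namespace IsExactCycleGAN

variable {X Y Z : Type*} [MeasurableSpace X] [MeasurableSpace Y] [MeasurableSpace Z]
  {μ : Measure X} {ν : Measure Y} {ρ : Measure Z} {G : X → Y} {F : Y → X} {G' : Y → Z} {F' : Z → Y}

theorem symm (h : IsExactCycleGAN μ ν G F) : IsExactCycleGAN ν μ F G :=
  ⟨h.measurable_backward, h.measurable_forward, h.map_backward, h.map_forward,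
    h.forward_comp_backward, h.backward_comp_forward⟩

theorem map_eq_of_ae_leftInverse (hG : Measurable G) (hF : Measurable F) (hGmap : μ.map G = ν)
    (hFG : F ∘ G =ᵐ[μ] id) : ν.map F = μ := by
  rw [← hGmap, Measure.map_map hF hG, Measure.map_congr hFG, Measure.map_id]

theorem of_map_forward (hG : Measurable G) (hF : Measurable F) (hGmap : μ.map G = ν)
    (hFG : F ∘ G =ᵐ[μ] id) (hGF : G ∘ F =ᵐ[ν] id) : IsExactCycleGAN μ ν G F :=
  ⟨hG, hF, hGmap, map_eq_of_ae_leftInverse hG hF hGmap hFG, hFG, hGF⟩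

theorem comp_backward_comp_forward (h₁ : IsExactCycleGAN μ ν G F) (h₂ : IsExactCycleGAN ν ρ G' F') :
    (F ∘ F') ∘ (G' ∘ G) =ᵐ[μ] id := by
  have h₂G : (F' ∘ G') ∘ G =ᵐ[μ] id ∘ G :=
    ae_eq_comp h₁.measurable_forward.aemeasurable (h₁.map_forward ▸ h₂.backward_comp_forward)
  filter_upwards [h₂G, h₁.backward_comp_forward] with x hx hFG
  simp only [Function.comp_apply, id_eq] at hx hFG ⊢
  rw [hx, hFG]

theorem comp (h₁ : IsExactCycleGAN μ ν G F) (h₂ : IsExactCycleGAN ν ρ G' F') :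
    IsExactCycleGAN μ ρ (G' ∘ G) (F ∘ F') where
  measurable_forward := h₂.measurable_forward.comp h₁.measurable_forward
  measurable_backward := h₁.measurable_backward.comp h₂.measurable_backward
  map_forward := by
    rw [← Measure.map_map h₂.measurable_forward h₁.measurable_forward, h₁.map_forward,
      h₂.map_forward]
  map_backward := by
    rw [← Measure.map_map h₁.measurable_backward h₂.measurable_backward, h₂.map_backward,
      h₁.map_backward]
  backward_comp_forward := comp_backward_comp_forward h₁ h₂
  forward_comp_backward := comp_backward_comp_forward h₂.symm h₁.symm

end IsExactCycleGAN

theorem cycleGAN_kernel_invariance_general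
    {X Y : Type*} [MeasurableSpace X] [MeasurableSpace Y]
    (μ : Measure X) (ν : Measure Y)
    (G : X → Y) (F : Y → X) (hG : Measurable G) (hF : Measurable F)
    (hGmap : μ.map G = ν) (hFmap : ν.map F = μ)
    (hFG : F ∘ G =ᵐ[μ] id) (hGF : G ∘ F =ᵐ[ν] id)
    (φ ψ : X → X) (hφ : Measurable φ) (hψ : Measurable ψ)
    (hφmap : μ.map φ = μ)
    (hψφ : ψ ∘ φ =ᵐ[μ] id) (hφψ : φ ∘ ψ =ᵐ[μ] id) :
    μ.map (G ∘ φ) = ν ∧ ν.map (ψ ∘ F) = μ ∧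
      (ψ ∘ F) ∘ (G ∘ φ) =ᵐ[μ] id ∧ (G ∘ φ) ∘ (ψ ∘ F) =ᵐ[ν] id := by
  have hsol : IsExactCycleGAN μ ν G F := ⟨hG, hF, hGmap, hFmap, hFG, hGF⟩
  have hauto : IsExactCycleGAN μ μ φ ψ := .of_map_forward hφ hψ hφmap hψφ hφψ
  obtain ⟨-, -, hmapG, hmapF, hFG', hGF'⟩ := hauto.comp hsol
  exact ⟨hmapG, hmapF, hFG', hGF'⟩

/-- Invariance of the CycleGAN kernel: composing an exact solution with a
probability space automorphism of the source yields again an exact solution. -/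
theorem cycleGAN_kernel_invariance
    {X Y : Type*} [MeasurableSpace X] [MeasurableSpace Y]
    (μ : Measure X) (ν : Measure Y)
    [IsProbabilityMeasure μ] [IsProbabilityMeasure ν]
    (G : X → Y) (F : Y → X) (hG : Measurable G) (hF : Measurable F)
    (hGmap : μ.map G = ν) (hFmap : ν.map F = μ)
    (hFG : F ∘ G =ᵐ[μ] id) (hGF : G ∘ F =ᵐ[ν] id)
    (φ ψ : X → X) (hφ : Measurable φ) (hψ : Measurable ψ)
    (hφmap : μ.map φ = μ)
    (hψφ : ψ ∘ φ =ᵐ[μ] id) (hφψ : φ ∘ ψ =ᵐ[μ] id) :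
    μ.map (G ∘ φ) = ν ∧ ν.map (ψ ∘ F) = μ ∧
      (ψ ∘ F) ∘ (G ∘ φ) =ᵐ[μ] id ∧ (G ∘ φ) ∘ (ψ ∘ F) =ᵐ[ν] id :=
  cycleGAN_kernel_invariance_general μ ν G F hG hF hGmap hFmap hFG hGF φ ψ hφ hψ hφmap hψφ hφψ
end

section
/- Let (X, μ) and (Y, ν) be probability spaces, let G : X → Y and F : Y → X be measurable maps forming an exact CycleGAN solution, and let φ : X → X be measurable with φ_*μ = μ and with a measurable map ψ : X → X satisfying ψ ∘ φ = id μ-almost everywhere and φ ∘ ψ = id μ-almost everywhere. If φ is not μ-almost everywhere equal to the identity map, then G ∘ φ is not μ-almost everywhere equal to G, and ψ ∘ F is not ν-almost everywhere equal to F. -/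
/-! Since `F ∘ G = id` a.e. and `G`, `φ` are measure preserving, `G` can be cancelled on the
left of `G ∘ φ = G` and `F` on the right of `ψ ∘ F = F`. The first gives `φ = id` directly;
the second gives `ψ = id`, and then `φ = ψ ∘ φ = id`. -/

namespace MeasureTheory

variable {α β : Type*} [MeasurableSpace α] {μ : Measure α}

theorem ae_eq_id_of_comp_left_ae_eq {f : α → β} {g : β → α} {a : α → α}
    (hgf : g ∘ f =ᵐ[μ] id) (ha : Measure.QuasiMeasurePreserving a μ μ) (h : f ∘ a =ᵐ[μ] f) :
    a =ᵐ[μ] id :=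
  calc a = id ∘ a := rfl
    _ =ᵐ[μ] (g ∘ f) ∘ a := (ha.ae_eq hgf).symm
    _ = g ∘ (f ∘ a) := rfl
    _ =ᵐ[μ] g ∘ f := h.fun_comp g
    _ =ᵐ[μ] id := hgf

theorem ae_eq_id_of_comp_right_ae_eq [MeasurableSpace β] {ν : Measure β}
    {f : α → β} {g : β → α} {p : α → α}
    (hgf : g ∘ f =ᵐ[μ] id) (hf : Measure.QuasiMeasurePreserving f μ ν) (h : p ∘ g =ᵐ[ν] g) :
    p =ᵐ[μ] id :=
  calc p = p ∘ id := rfl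
    _ =ᵐ[μ] p ∘ (g ∘ f) := (hgf.fun_comp p).symm
    _ = (p ∘ g) ∘ f := rfl
    _ =ᵐ[μ] g ∘ f := hf.ae_eq h
    _ =ᵐ[μ] id := hgf

theorem ae_eq_id_of_comp_ae_eq_id {φ ψ : α → α} (hφ : Measure.QuasiMeasurePreserving φ μ μ)
    (hψ : ψ =ᵐ[μ] id) (hψφ : ψ ∘ φ =ᵐ[μ] id) : φ =ᵐ[μ] id :=
  (hφ.ae_eq hψ).symm.trans hψφ

end MeasureTheory

open MeasureTheory

theorem cycleGAN_kernel_nontrivial_perturbation_general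
    {X Y : Type*} [MeasurableSpace X] [MeasurableSpace Y]
    (μ : Measure X) (ν : Measure Y)
    (G : X → Y) (F : Y → X) (hG : Measurable G)
    (hGmap : μ.map G = ν)
    (hFG : F ∘ G =ᵐ[μ] id)
    (φ ψ : X → X) (hφ : Measurable φ)
    (hφmap : μ.map φ = μ)
    (hψφ : ψ ∘ φ =ᵐ[μ] id)
    (hφne : ¬ (φ =ᵐ[μ] id)) :
    ¬ (G ∘ φ =ᵐ[μ] G) ∧ ¬ (ψ ∘ F =ᵐ[ν] F) := by
  have hφ' := (MeasurePreserving.mk hφ hφmap).quasiMeasurePreserving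
  have hG' := (MeasurePreserving.mk hG hGmap).quasiMeasurePreserving
  refine ⟨fun h ↦ hφne (ae_eq_id_of_comp_left_ae_eq hFG hφ' h), fun h ↦ hφne ?_⟩
  exact ae_eq_id_of_comp_ae_eq_id hφ' (ae_eq_id_of_comp_right_ae_eq hFG hG' h) hψφ

/-- If the automorphism `φ` is nontrivial (not a.e. equal to the identity), then
the perturbed exact CycleGAN solution `(G ∘ φ, ψ ∘ F)` genuinely differs from `(G, F)`. -/
theorem cycleGAN_kernel_nontrivial_perturbation
    {X Y : Type*} [MeasurableSpace X] [MeasurableSpace Y]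
    (μ : Measure X) (ν : Measure Y)
    [IsProbabilityMeasure μ] [IsProbabilityMeasure ν]
    (G : X → Y) (F : Y → X) (hG : Measurable G) (hF : Measurable F)
    (hGmap : μ.map G = ν) (hFmap : ν.map F = μ)
    (hFG : F ∘ G =ᵐ[μ] id) (hGF : G ∘ F =ᵐ[ν] id)
    (φ ψ : X → X) (hφ : Measurable φ) (hψ : Measurable ψ)
    (hφmap : μ.map φ = μ)
    (hψφ : ψ ∘ φ =ᵐ[μ] id) (hφψ : φ ∘ ψ =ᵐ[μ] id)
    (hφne : ¬ (φ =ᵐ[μ] id)) :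
    ¬ (G ∘ φ =ᵐ[μ] G) ∧ ¬ (ψ ∘ F =ᵐ[ν] F) :=
  cycleGAN_kernel_nontrivial_perturbation_general μ ν G F hG hGmap hFG φ ψ hφ hφmap hψφ hφne
end

section
/- Let (X, μ) and (Y, ν) be probability spaces and let (G, F) and (G', F') be two exact CycleGAN solutions, where G, G' : X → Y and F, F' : Y → X. Define φ := F ∘ G' : X → X and ψ := F' ∘ G : X → X. Then φ_*μ = μ, ψ ∘ φ = id μ-almost everywhere, φ ∘ ψ = id μ-almost everywhere (so φ is an automorphism of (X, μ)), and moreover G ∘ φ = G' μ-almost everywhere and ψ ∘ F = F' ν-almost everywhere. -/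
/-!
Pulling `G ∘ F = id` (ν-a.e.) back along `G'`, which pushes `μ` to `ν`, gives `G ∘ φ = G'` μ-a.e.;
symmetrically `G' ∘ ψ = G`. Composing these with `F'` and `F` and using the cycle identities
of the other solution yields `ψ ∘ φ = id` and `φ ∘ ψ = id`.
-/

open MeasureTheory

theorem comp_comp_ae_eq_of_map_eq {X Y Z : Type*} [MeasurableSpace Y] [MeasurableSpace Z]
    {μ : Measure Z} {ν : Measure Y} {G : X → Y} {F : Y → X} {H : Z → Y}
    (hH : AEMeasurable H μ) (hmap : μ.map H = ν) (hGF : G ∘ F =ᵐ[ν] id) :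
    G ∘ F ∘ H =ᵐ[μ] H :=
  ae_eq_comp hH (hmap ▸ hGF)

theorem cycleGAN_kernel_principal_homogeneous_general
    {X Y : Type*} [MeasurableSpace X] [MeasurableSpace Y]
    (μ : Measure X) (ν : Measure Y)
    (G G' : X → Y) (F F' : Y → X)
    (hG : Measurable G) (hF : Measurable F)
    (hG' : Measurable G')
    (hGmap : μ.map G = ν) (hFmap : ν.map F = μ)
    (hFG : F ∘ G =ᵐ[μ] id) (hGF : G ∘ F =ᵐ[ν] id)
    (hG'map : μ.map G' = ν)
    (hF'G' : F' ∘ G' =ᵐ[μ] id) (hG'F' : G' ∘ F' =ᵐ[ν] id) :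
    μ.map (F ∘ G') = μ ∧
      (F' ∘ G) ∘ (F ∘ G') =ᵐ[μ] id ∧ (F ∘ G') ∘ (F' ∘ G) =ᵐ[μ] id ∧
      G ∘ (F ∘ G') =ᵐ[μ] G' ∧ (F' ∘ G) ∘ F =ᵐ[ν] F' := by
  have hGφ : G ∘ F ∘ G' =ᵐ[μ] G' := comp_comp_ae_eq_of_map_eq hG'.aemeasurable hG'map hGF
  have hG'ψ : G' ∘ F' ∘ G =ᵐ[μ] G := comp_comp_ae_eq_of_map_eq hG.aemeasurable hGmap hG'F'
  refine ⟨?_, (hGφ.fun_comp F').trans hF'G', (hG'ψ.fun_comp F).trans hFG, hGφ, hGF.fun_comp F'⟩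
  rw [← Measure.map_map hF hG', hG'map, hFmap]

/-- The CycleGAN kernel as a principal homogeneous space: any two exact solutions
`(G, F)` and `(G', F')` differ by the probability space automorphism `φ = F ∘ G'`
(with essential inverse `ψ = F' ∘ G`). -/
theorem cycleGAN_kernel_principal_homogeneous
    {X Y : Type*} [MeasurableSpace X] [MeasurableSpace Y]
    (μ : Measure X) (ν : Measure Y)
    [IsProbabilityMeasure μ] [IsProbabilityMeasure ν]
    (G G' : X → Y) (F F' : Y → X)
    (hG : Measurable G) (hF : Measurable F)
    (hG' : Measurable G') (hF' : Measurable F')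
    (hGmap : μ.map G = ν) (hFmap : ν.map F = μ)
    (hFG : F ∘ G =ᵐ[μ] id) (hGF : G ∘ F =ᵐ[ν] id)
    (hG'map : μ.map G' = ν) (hF'map : ν.map F' = μ)
    (hF'G' : F' ∘ G' =ᵐ[μ] id) (hG'F' : G' ∘ F' =ᵐ[ν] id) :
    μ.map (F ∘ G') = μ ∧
      (F' ∘ G) ∘ (F ∘ G') =ᵐ[μ] id ∧ (F ∘ G') ∘ (F' ∘ G) =ᵐ[μ] id ∧
      G ∘ (F ∘ G') =ᵐ[μ] G' ∧ (F' ∘ G) ∘ F =ᵐ[ν] F' :=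
  cycleGAN_kernel_principal_homogeneous_general μ ν G G' F F' hG hF hG' hGmap hFmap hFG hGF hG'map
    hF'G' hG'F'
end

section
/- Let (X, μ) and (Y, ν) be probability spaces and let (G, F) and (G', F') be two exact CycleGAN solutions, where G, G' : X → Y and F, F' : Y → X. If φ' : X → X is any measurable map with φ'_*μ = μ and G ∘ φ' = G' μ-almost everywhere, then φ' = F ∘ G' μ-almost everywhere. In particular, the automorphism connecting two exact solutions is unique up to μ-almost everywhere equality. -/
open MeasureTheory

theorem cycleGAN_connecting_automorphism_unique_general
    {X Y : Type*} [MeasurableSpace X]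
    (μ : Measure X)
    (G G' : X → Y) (F : Y → X)
    (hFG : F ∘ G =ᵐ[μ] id)
    (φ' : X → X) (hφ' : Measurable φ') (hφ'map : μ.map φ' = μ)
    (hφ'G : G ∘ φ' =ᵐ[μ] G') :
    φ' =ᵐ[μ] F ∘ G' := by
  have hpres : MeasurePreserving φ' μ μ := ⟨hφ', hφ'map⟩
  calc φ' =ᵐ[μ] (F ∘ G) ∘ φ' := (hpres.quasiMeasurePreserving.ae_eq_comp hFG).symm
    _ =ᵐ[μ] F ∘ G' := hφ'G.fun_comp F

/-- Uniqueness of the connecting automorphism: if a measure-preserving map `φ'`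
sends the exact solution `(G, F)` to `(G', F')` (in the sense `G ∘ φ' = G'` a.e.),
then `φ'` coincides a.e. with `F ∘ G'`. -/
theorem cycleGAN_connecting_automorphism_unique
    {X Y : Type*} [MeasurableSpace X] [MeasurableSpace Y]
    (μ : Measure X) (ν : Measure Y)
    [IsProbabilityMeasure μ] [IsProbabilityMeasure ν]
    (G G' : X → Y) (F F' : Y → X)
    (hG : Measurable G) (hF : Measurable F)
    (hG' : Measurable G') (hF' : Measurable F')
    (hGmap : μ.map G = ν) (hFmap : ν.map F = μ)
    (hFG : F ∘ G =ᵐ[μ] id) (hGF : G ∘ F =ᵐ[ν] id)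
    (hG'map : μ.map G' = ν) (hF'map : ν.map F' = μ)
    (hF'G' : F' ∘ G' =ᵐ[μ] id) (hG'F' : G' ∘ F' =ᵐ[ν] id)
    (φ' : X → X) (hφ' : Measurable φ') (hφ'map : μ.map φ' = μ)
    (hφ'G : G ∘ φ' =ᵐ[μ] G') :
    φ' =ᵐ[μ] F ∘ G' :=
  cycleGAN_connecting_automorphism_unique_general μ G G' F hFG φ' hφ' hφ'map hφ'G
end

section
/- Let X and Y be measurable spaces, μ a probability measure on X, ν a probability measure on Y, F : Y → X a measurable map with F_*ν absolutely continuous with respect to μ, and φ : X → X a bijective measurable map with measurable inverse φ⁻¹ such that φ_*μ = μ. Then (φ⁻¹ ∘ F)_*ν is absolutely continuous with respect to μ, and for every measurable function f : ℝ≥0∞ → ℝ≥0∞ one has ∫⁻ f( d((φ⁻¹ ∘ F)_*ν)/dμ (x) ) dμ(x) = ∫⁻ f( d(F_*ν)/dμ (x) ) dμ(x); that is, the f-divergence term of the CycleGAN loss is invariant under composing F with the inverse of a measure-preserving bijection. -/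
/-!
`φ⁻¹` is a measurable equivalence preserving `μ`, and `(φ⁻¹ ∘ F)_*ν = φ⁻¹_*(F_*ν)`. Pushing both
measures of a Radon–Nikodym derivative forward along a measurable embedding only relabels points,
`d(φ⁻¹_*ρ)/d(φ⁻¹_*μ) ∘ φ⁻¹ = dρ/dμ` a.e., and since `φ⁻¹_*μ = μ` the change of variables `x ↦ φ⁻¹ x`
turns one integral into the other.
-/

open MeasureTheory ENNReal

theorem MeasurableEmbedding.map_comp {α β γ : Type*} [MeasurableSpace α] [MeasurableSpace β]
    [MeasurableSpace γ] {g : β → γ} (hg : MeasurableEmbedding g) (ν : Measure α) (f : α → β) :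
    ν.map (g ∘ f) = (ν.map f).map g := by
  by_cases hf : AEMeasurable f ν
  · exact (AEMeasurable.map_map_of_aemeasurable hg.measurable.aemeasurable hf).symm
  · rw [Measure.map_of_not_aemeasurable hf, Measure.map_zero,
      Measure.map_of_not_aemeasurable (mt hg.aemeasurable_comp_iff.1 hf)]

namespace MeasureTheory.MeasurePreserving

variable {α β : Type*} [MeasurableSpace α] [MeasurableSpace β] {μ : Measure α} {μ' : Measure β}
  {g : α → β}

theorem absolutelyContinuous_map (hg : MeasurePreserving g μ μ') {ρ : Measure α} (hρ : ρ ≪ μ) :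
    ρ.map g ≪ μ' :=
  hg.map_eq ▸ hρ.map hg.measurable

theorem lintegral_comp_rnDeriv_map [SigmaFinite μ] (hg : MeasurePreserving g μ μ')
    (hge : MeasurableEmbedding g) (ρ : Measure α) [SigmaFinite ρ] (f : ℝ≥0∞ → ℝ≥0∞) :
    ∫⁻ y, f ((ρ.map g).rnDeriv μ' y) ∂μ' = ∫⁻ x, f (ρ.rnDeriv μ x) ∂μ := by
  calc ∫⁻ y, f ((ρ.map g).rnDeriv μ' y) ∂μ'
      = ∫⁻ x, f ((ρ.map g).rnDeriv (μ.map g) (g x)) ∂μ := by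
        rw [hg.map_eq]; exact (hg.lintegral_comp_emb hge _).symm
    _ = ∫⁻ x, f (ρ.rnDeriv μ x) ∂μ :=
        lintegral_congr_ae <| (hge.rnDeriv_map ρ μ).mono fun _ hx => congrArg f hx

end MeasureTheory.MeasurePreserving

theorem fDivergence_term_invariant_general
    {X Y : Type*} [MeasurableSpace X] [MeasurableSpace Y]
    (μ : Measure X) (ν : Measure Y)
    [IsProbabilityMeasure μ] [IsProbabilityMeasure ν]
    (F : Y → X) (habs : ν.map F ≪ μ)
    (φ φinv : X → X) (hφ : Measurable φ) (hφinv : Measurable φinv)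
    (hleft : Function.LeftInverse φinv φ) (hright : Function.RightInverse φinv φ)
    (hφmap : μ.map φ = μ) :
    ν.map (φinv ∘ F) ≪ μ ∧
      ∀ f : ℝ≥0∞ → ℝ≥0∞, Measurable f →
        ∫⁻ x, f ((ν.map (φinv ∘ F)).rnDeriv μ x) ∂μ
          = ∫⁻ x, f ((ν.map F).rnDeriv μ x) ∂μ := by
  let e : X ≃ᵐ X := ⟨⟨φinv, φ, hright, hleft⟩, hφinv, hφ⟩
  have he : MeasurePreserving e μ μ := MeasurePreserving.symm e.symm ⟨hφ, hφmap⟩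
  rw [show φinv ∘ F = e ∘ F from rfl, e.measurableEmbedding.map_comp]
  exact ⟨he.absolutelyContinuous_map habs,
    fun f _ => he.lintegral_comp_rnDeriv_map e.measurableEmbedding _ f⟩

/-- The `f`-divergence term of the CycleGAN loss is invariant under composing `F`
with the inverse of a measure-preserving bijection `φ`. -/
theorem fDivergence_term_invariant
    {X Y : Type*} [MeasurableSpace X] [MeasurableSpace Y]
    (μ : Measure X) (ν : Measure Y)
    [IsProbabilityMeasure μ] [IsProbabilityMeasure ν]
    (F : Y → X) (hF : Measurable F) (habs : ν.map F ≪ μ)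
    (φ φinv : X → X) (hφ : Measurable φ) (hφinv : Measurable φinv)
    (hbij : Function.Bijective φ)
    (hleft : Function.LeftInverse φinv φ) (hright : Function.RightInverse φinv φ)
    (hφmap : μ.map φ = μ) :
    ν.map (φinv ∘ F) ≪ μ ∧
      ∀ f : ℝ≥0∞ → ℝ≥0∞, Measurable f →
        ∫⁻ x, f ((ν.map (φinv ∘ F)).rnDeriv μ x) ∂μ
          = ∫⁻ x, f ((ν.map F).rnDeriv μ x) ∂μ :=
  fDivergence_term_invariant_general μ ν F habs φ φinv hφ hφinv hleft hright hφmap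
end

section
/- Perturbation bound for the extended CycleGAN loss: Let μ, ν be probability measures on ℝⁿ, let f : ℝ≥0∞ → ℝ≥0∞ be measurable, and let α_cyc, α_id ∈ ℝ≥0∞. For measurable G, F : ℝⁿ → ℝⁿ define L_ext(G, F) := ∫⁻ f(d(G_*μ)/dν) dν + ∫⁻ f(d(F_*ν)/dμ) dμ + α_cyc · ( ∫⁻ ‖F(G(x)) − x‖ dμ(x) + ∫⁻ ‖G(F(y)) − y‖ dν(y) ) + α_id · ( ∫⁻ ‖F(y) − y‖ dν(y) + ∫⁻ ‖G(x) − x‖ dμ(x) ). Let φ : ℝⁿ → ℝⁿ be a bijective measurable map with φ_*μ = μ whose inverse φ⁻¹ is measurable and C-Lipschitz for some C > 0, and assume F_*ν is absolutely continuous with respect to μ. Then L_ext(G ∘ φ, φ⁻¹ ∘ F) ≤ max(C, 1) · L_ext(G, F) + α_id · ( ∫⁻ ‖φ(x) − x‖ dμ(x) + ∫⁻ ‖φ⁻¹(y) − y‖ dν(y) ). -/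
open MeasureTheory ENNReal NNReal

/-! Since `φ` preserves `μ` and `φ⁻¹` is an inverse, both divergence terms and the cycle term
`‖G (F y) - y‖` are unchanged, while the Lipschitz bound on `φ⁻¹` gives a factor `C` on
`‖F (G x) - x‖` after substituting `x ↦ φ x`. The two identity terms only grow by the triangle
inequality through `φ x`, resp. `φ⁻¹ y`, which produces the additive `aid`-term. -/

/-- The extended CycleGAN loss of the pair `(G, F)` with respect to the
probability measures `μ`, `ν`, the divergence generator `f`, and the weights
`acyc` (cycle-consistency) and `aid` (identity loss). -/
noncomputable def extendedCycleGANLoss {n : ℕ}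
    (μ ν : Measure (EuclideanSpace ℝ (Fin n)))
    (f : ℝ≥0∞ → ℝ≥0∞) (acyc aid : ℝ≥0∞)
    (G F : EuclideanSpace ℝ (Fin n) → EuclideanSpace ℝ (Fin n)) : ℝ≥0∞ :=
  ∫⁻ y, f ((μ.map G).rnDeriv ν y) ∂ν + ∫⁻ x, f ((ν.map F).rnDeriv μ x) ∂μ
    + acyc * (∫⁻ x, (‖F (G x) - x‖₊ : ℝ≥0∞) ∂μ
        + ∫⁻ y, (‖G (F y) - y‖₊ : ℝ≥0∞) ∂ν)
    + aid * (∫⁻ y, (‖F y - y‖₊ : ℝ≥0∞) ∂ν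
        + ∫⁻ x, (‖G x - x‖₊ : ℝ≥0∞) ∂μ)

section

variable {α : Type*} [MeasurableSpace α] {μ : Measure α}

theorem MeasureTheory.MeasurePreserving.lintegral_comp_rnDeriv_map_s10 {g : α → α}
    (hg : MeasurePreserving g μ μ) (hge : MeasurableEmbedding g) (ρ : Measure α)
    [SigmaFinite ρ] [SigmaFinite μ] (f : ℝ≥0∞ → ℝ≥0∞) :
    ∫⁻ x, f ((ρ.map g).rnDeriv μ x) ∂μ = ∫⁻ x, f (ρ.rnDeriv μ x) ∂μ := by
  have hrn := hge.rnDeriv_map ρ μ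
  rw [hg.map_eq] at hrn
  rw [← hg.lintegral_comp_emb hge]
  exact lintegral_congr_ae (hrn.fun_comp f)

variable {β : Type*} [PseudoEMetricSpace β]

theorem lintegral_edist_le_lintegral_edist_add {u v w : α → β}
    (hvw : AEMeasurable (fun x ↦ edist (v x) (w x)) μ) :
    ∫⁻ x, edist (u x) (w x) ∂μ ≤ ∫⁻ x, edist (u x) (v x) ∂μ + ∫⁻ x, edist (v x) (w x) ∂μ :=
  (lintegral_mono fun _ ↦ edist_triangle _ _ _).trans_eq (lintegral_add_right' _ hvw)

theorem LipschitzWith.lintegral_edist_comp_le {γ : Type*} [PseudoEMetricSpace γ] {ψ : β → γ}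
    {C : ℝ≥0} (hψ : LipschitzWith C ψ) (u v : α → β) :
    ∫⁻ x, edist (ψ (u x)) (ψ (v x)) ∂μ ≤ C * ∫⁻ x, edist (u x) (v x) ∂μ :=
  (lintegral_mono fun _ ↦ hψ.edist_le_mul _ _).trans_eq
    (lintegral_const_mul' _ _ ENNReal.coe_ne_top)

theorem MeasureTheory.MeasurePreserving.lintegral_edist_conj_le [MeasurableSpace β] {φ ψ : β → β}
    {ν : Measure β} (hφ : MeasurePreserving φ ν ν) (hφe : MeasurableEmbedding φ) {C : ℝ≥0}
    (hψ : LipschitzWith C ψ) (hψφ : Function.LeftInverse ψ φ) (u : β → β) :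
    ∫⁻ x, edist (ψ (u (φ x))) x ∂ν ≤ C * ∫⁻ x, edist (u x) x ∂ν := by
  calc ∫⁻ x, edist (ψ (u (φ x))) x ∂ν = ∫⁻ x, edist (ψ (u (φ x))) (ψ (φ x)) ∂ν := by
        simp only [hψφ _]
    _ ≤ C * ∫⁻ x, edist (u (φ x)) (φ x) ∂ν := hψ.lintegral_edist_comp_le _ _
    _ = C * ∫⁻ x, edist (u x) x ∂ν := by
        rw [hφ.lintegral_comp_emb hφe (fun y ↦ edist (u y) y)]

theorem loss_sum_le_of_term_bounds {M d₁ d₂ a a' b i i' j j' p q s t : ℝ≥0∞} (hM : 1 ≤ M)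
    (ha : a' ≤ M * a) (hi : i' ≤ M * i + q) (hj : j' ≤ j + p) :
    d₁ + d₂ + s * (a' + b) + t * (i' + j')
      ≤ M * (d₁ + d₂ + s * (a + b) + t * (i + j)) + t * (p + q) := by
  have hle (x : ℝ≥0∞) : x ≤ M * x := le_mul_of_one_le_left' hM
  calc d₁ + d₂ + s * (a' + b) + t * (i' + j')
      ≤ M * d₁ + M * d₂ + s * (M * a + M * b) + t * ((M * i + q) + (M * j + p)) := by
        gcongr
        exacts [hle _, hle _, hle _, hj.trans (add_le_add_left (hle _) _)]
    _ = M * (d₁ + d₂ + s * (a + b) + t * (i + j)) + t * (p + q) := by ring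

end

theorem extendedCycleGANLoss_perturbation_bound_general
    {n : ℕ} (μ ν : Measure (EuclideanSpace ℝ (Fin n)))
    [IsProbabilityMeasure μ] [IsProbabilityMeasure ν]
    (f : ℝ≥0∞ → ℝ≥0∞)
    (acyc aid : ℝ≥0∞)
    (G F : EuclideanSpace ℝ (Fin n) → EuclideanSpace ℝ (Fin n))
    (hG : Measurable G) (hF : Measurable F)
    (φ φinv : EuclideanSpace ℝ (Fin n) → EuclideanSpace ℝ (Fin n))
    (hφ : Measurable φ) (hφinv : Measurable φinv)
    (hleft : Function.LeftInverse φinv φ) (hright : Function.RightInverse φinv φ)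
    (hφmap : μ.map φ = μ)
    (C : ℝ≥0) (hLip : ∀ a b, ‖φinv a - φinv b‖ ≤ (C : ℝ) * ‖a - b‖) :
    extendedCycleGANLoss μ ν f acyc aid (G ∘ φ) (φinv ∘ F)
      ≤ ((max C 1 : ℝ≥0) : ℝ≥0∞) * extendedCycleGANLoss μ ν f acyc aid G F
        + aid * (∫⁻ x, (‖φ x - x‖₊ : ℝ≥0∞) ∂μ
            + ∫⁻ y, (‖φinv y - y‖₊ : ℝ≥0∞) ∂ν) := by
  let e : EuclideanSpace ℝ (Fin n) ≃ᵐ EuclideanSpace ℝ (Fin n) :=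
    ⟨⟨φ, φinv, hleft, hright⟩, hφ, hφinv⟩
  have he : MeasurePreserving e μ μ := ⟨hφ, hφmap⟩
  have hLipM : LipschitzWith (max C 1) φinv :=
    (LipschitzWith.of_dist_le_mul fun a b ↦ by simpa only [dist_eq_norm] using hLip a b).weaken
      (le_max_left C 1)
  have hM : (1 : ℝ≥0∞) ≤ (max C 1 : ℝ≥0) := by exact_mod_cast le_max_right C 1
  have hdiv : ∫⁻ x, f ((ν.map (φinv ∘ F)).rnDeriv μ x) ∂μ
      = ∫⁻ x, f ((ν.map F).rnDeriv μ x) ∂μ := by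
    rw [← Measure.map_map hφinv hF]
    exact (he.symm e).lintegral_comp_rnDeriv_map_s10 e.symm.measurableEmbedding _ f
  have hcyc := he.lintegral_edist_conj_le e.measurableEmbedding hLipM hleft (F ∘ G)
  have hidF : ∫⁻ y, edist (φinv (F y)) y ∂ν
      ≤ (max C 1 : ℝ≥0) * ∫⁻ y, edist (F y) y ∂ν + ∫⁻ y, edist (φinv y) y ∂ν :=
    (lintegral_edist_le_lintegral_edist_add (hφinv.edist measurable_id).aemeasurable).trans
      (add_le_add_left (hLipM.lintegral_edist_comp_le _ _) _)
  have hidG : ∫⁻ x, edist (G (φ x)) x ∂μ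
      ≤ ∫⁻ x, edist (G x) x ∂μ + ∫⁻ x, edist (φ x) x ∂μ := by
    rw [← he.lintegral_comp_emb e.measurableEmbedding (fun x ↦ edist (G x) x)]
    exact lintegral_edist_le_lintegral_edist_add (hφ.edist measurable_id).aemeasurable
  simp only [extendedCycleGANLoss, Function.comp_apply, hright _, ← nndist_eq_nnnorm,
    ← edist_nndist]
  rw [← Measure.map_map hG hφ, hφmap, hdiv]
  exact loss_sum_le_of_term_bounds hM hcyc hidF hidG

/-- Perturbation bound for the extended CycleGAN loss under conjugation by a
measure-preserving bijection `φ` with `C`-Lipschitz inverse. -/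
theorem extendedCycleGANLoss_perturbation_bound
    {n : ℕ} (μ ν : Measure (EuclideanSpace ℝ (Fin n)))
    [IsProbabilityMeasure μ] [IsProbabilityMeasure ν]
    (f : ℝ≥0∞ → ℝ≥0∞) (hf : Measurable f)
    (acyc aid : ℝ≥0∞)
    (G F : EuclideanSpace ℝ (Fin n) → EuclideanSpace ℝ (Fin n))
    (hG : Measurable G) (hF : Measurable F)
    (φ φinv : EuclideanSpace ℝ (Fin n) → EuclideanSpace ℝ (Fin n))
    (hφ : Measurable φ) (hφinv : Measurable φinv)
    (hbij : Function.Bijective φ)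
    (hleft : Function.LeftInverse φinv φ) (hright : Function.RightInverse φinv φ)
    (hφmap : μ.map φ = μ)
    (C : ℝ≥0) (hC : 0 < C) (hLip : ∀ a b, ‖φinv a - φinv b‖ ≤ (C : ℝ) * ‖a - b‖)
    (habs : ν.map F ≪ μ) :
    extendedCycleGANLoss μ ν f acyc aid (G ∘ φ) (φinv ∘ F)
      ≤ ((max C 1 : ℝ≥0) : ℝ≥0∞) * extendedCycleGANLoss μ ν f acyc aid G F
        + aid * (∫⁻ x, (‖φ x - x‖₊ : ℝ≥0∞) ∂μ
            + ∫⁻ y, (‖φinv y - y‖₊ : ℝ≥0∞) ∂ν) :=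
  extendedCycleGANLoss_perturbation_bound_general μ ν f acyc aid G F hG hF φ φinv hφ hφinv hleft
    hright hφmap C hLip
end

section
/- Existence of nontrivial automorphisms in the non-purely-atomic case: Let X be a standard Borel space and μ a probability measure on X which is not purely atomic, in the sense that ∑' (x : X), μ {x} < 1. Then there exist measurable maps φ, ψ : X → X with φ_*μ = μ, ψ ∘ φ = id μ-almost everywhere, φ ∘ ψ = id μ-almost everywhere, and such that φ is not μ-almost everywhere equal to the identity map; i.e. (X, μ) admits a nontrivial probability space automorphism. -/
open MeasureTheory Set Filter ProbabilityTheory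
open scoped ENNReal

/-!
It suffices to find a measure-preserving almost-everywhere involution `σ` that is not almost
everywhere the identity, and take `φ = ψ = σ`. The atoms of `μ` form a countable set `A`; let `σ`
be the identity on `A`. On the complement `μ` is atomless and nonzero; after normalising and
transporting along a Borel isomorphism `X ≃ ℝ` it becomes an atomless probability measure `ν` on
`ℝ`. Its cdf `F` is continuous, pushes `ν` to Lebesgue measure on `(0, 1)`, and has the quantile
function `Q` as an almost-everywhere inverse, so conjugating the reflection `t ↦ 1 - t` gives the
involution `x ↦ Q (1 - F x)` of `ν`.
-/

namespace MeasureTheory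

variable {α β : Type*} [MeasurableSpace α] [MeasurableSpace β]

structure IsNontrivialInvolution (μ : Measure α) (σ : α → α) : Prop where
  measurePreserving : MeasurePreserving σ μ μ
  ae_involutive : σ ∘ σ =ᵐ[μ] id
  not_ae_eq_id : ¬ σ =ᵐ[μ] id

theorem ae_smul_measure_eq_of_ne_zero {μ : Measure α} {c : ℝ≥0∞} (hc : c ≠ 0) :
    ae (c • μ) = ae μ := by
  ext s
  simp [mem_ae_iff, hc]

namespace IsNontrivialInvolution

variable {μ : Measure α} {σ : α → α}

theorem smul (hσ : IsNontrivialInvolution μ σ) {c : ℝ≥0∞} (hc : c ≠ 0) :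
    IsNontrivialInvolution (c • μ) σ where
  measurePreserving :=
    ⟨hσ.measurePreserving.measurable, by rw [Measure.map_smul, hσ.measurePreserving.map_eq]⟩
  ae_involutive := by
    rw [EventuallyEq, ae_smul_measure_eq_of_ne_zero hc]
    exact hσ.ae_involutive
  not_ae_eq_id := by
    rw [EventuallyEq, ae_smul_measure_eq_of_ne_zero hc]
    exact hσ.not_ae_eq_id

theorem conj {ν : Measure β} {τ : β → β} (hτ : IsNontrivialInvolution ν τ) {F : α → β}
    {G : β → α} (hF : MeasurePreserving F μ ν) (hG : Measurable G) (hGF : G ∘ F =ᵐ[μ] id)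
    (hFG : F ∘ G =ᵐ[ν] id) : IsNontrivialInvolution μ (G ∘ τ ∘ F) := by
  have hG' : MeasurePreserving G ν μ := ⟨hG, by
    rw [← hF.map_eq, Measure.map_map hG hF.measurable, Measure.map_congr hGF, Measure.map_id]⟩
  have hτF := hτ.measurePreserving.comp hF
  refine ⟨hG'.comp hτF, ?_, fun h => hτ.not_ae_eq_id ?_⟩
  · filter_upwards [hτF.quasiMeasurePreserving.ae hFG,
      hF.quasiMeasurePreserving.ae hτ.ae_involutive, hGF] with x hFG_x hτ_x hGF_x
    simp only [Function.comp_apply, id] at *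
    rw [hFG_x, hτ_x, hGF_x]
  · filter_upwards [hG'.quasiMeasurePreserving.ae h, hFG,
      hτ.measurePreserving.quasiMeasurePreserving.ae hFG] with y h_y hFG_y hFG_τy
    simp only [Function.comp_apply, id] at *
    rw [hFG_y] at h_y
    rw [← hFG_τy, h_y, hFG_y]

theorem piecewise_id {s : Set α} [DecidablePred (· ∈ s)] (hs : MeasurableSet s)
    (hσ : IsNontrivialInvolution (μ.restrict sᶜ) σ) :
    IsNontrivialInvolution μ (s.piecewise id σ) := by
  have h_on_s : s.piecewise id σ =ᵐ[μ.restrict s] id := by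
    filter_upwards [ae_restrict_mem hs] with x hx using s.piecewise_eq_of_mem _ _ hx
  have h_off_s : s.piecewise id σ =ᵐ[μ.restrict sᶜ] σ := by
    filter_upwards [ae_restrict_mem hs.compl] with x hx using s.piecewise_eq_of_notMem _ _ hx
  have hmeas : Measurable (s.piecewise id σ) :=
    measurable_id.piecewise hs hσ.measurePreserving.measurable
  refine ⟨⟨hmeas, ?_⟩, ?_, fun h => hσ.not_ae_eq_id (h_off_s.symm.trans (ae_restrict_of_ae h))⟩
  · calc μ.map (s.piecewise id σ) = (μ.restrict s + μ.restrict sᶜ).map (s.piecewise id σ) := by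
          rw [Measure.restrict_add_restrict_compl hs]
      _ = (μ.restrict s).map id + (μ.restrict sᶜ).map σ := by
          rw [Measure.map_add _ _ hmeas, Measure.map_congr h_on_s, Measure.map_congr h_off_s]
      _ = μ := by
          rw [Measure.map_id, hσ.measurePreserving.map_eq, Measure.restrict_add_restrict_compl hs]
  · rw [EventuallyEq, ← Measure.restrict_add_restrict_compl hs (μ := μ), ae_add_measure_iff]
    refine ⟨?_, ?_⟩
    · filter_upwards [ae_restrict_mem hs] with x hx
      have hfix : s.piecewise id σ x = x := s.piecewise_eq_of_mem _ _ hx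
      rw [Function.comp_apply, hfix, hfix, id]
    · filter_upwards [ae_restrict_mem hs.compl,
        hσ.measurePreserving.quasiMeasurePreserving.ae (ae_restrict_mem hs.compl),
        hσ.ae_involutive] with x hx hσx hσσx
      rw [Function.comp_apply, s.piecewise_eq_of_notMem _ _ hx, s.piecewise_eq_of_notMem _ _ hσx]
      exact hσσx

end IsNontrivialInvolution

theorem isNontrivialInvolution_one_sub :
    IsNontrivialInvolution (volume.restrict (Ioo (0 : ℝ) 1)) (fun t => 1 - t) where
  measurePreserving := by
    simpa using (Measure.measurePreserving_sub_left volume (1 : ℝ)).restrict_preimage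
      (measurableSet_Ioo (a := 0) (b := 1))
  ae_involutive := Eventually.of_forall fun t => sub_sub_cancel 1 t
  not_ae_eq_id h := by
    have h_false : ∀ᵐ t ∂volume.restrict (Ioo (0 : ℝ) 1), False := by
      filter_upwards [h, Measure.ae_ne _ (1 / 2)] with t h_fix h_ne
      exact h_ne (by simp only [id] at h_fix; linarith)
    simpa using ae_iff.1 h_false

end MeasureTheory

namespace ProbabilityTheory

variable (ν : Measure ℝ)

/-- Only the values on `(0, 1)` matter; the junk value `0` elsewhere makes the quantile measurable
as soon as it is monotone on `(0, 1)`. -/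
noncomputable def quantile (t : ℝ) : ℝ := if t ∈ Ioo 0 1 then sInf {x | t ≤ cdf ν x} else 0

theorem quantile_le_iff {t : ℝ} (ht : t ∈ Ioo 0 1) (x : ℝ) :
    quantile ν t ≤ x ↔ t ≤ cdf ν x := by
  set S := {x | t ≤ cdf ν x}
  have hne : S.Nonempty :=
    ((tendsto_cdf_atTop ν).eventually (eventually_gt_nhds ht.2)).exists.imp fun _ h => h.le
  have hbdd : BddBelow S := by
    obtain ⟨a, ha⟩ :=
      eventually_atBot.1 ((tendsto_cdf_atBot ν).eventually (eventually_lt_nhds ht.1))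
    exact ⟨a, fun y hy => le_of_not_gt fun hya => (ha y hya.le).not_ge hy⟩
  have hmem : sInf S ∈ S := by
    refine ge_of_tendsto ((cdf ν).right_continuous _ |>.mono Ioi_subset_Ici_self) ?_
    filter_upwards [self_mem_nhdsWithin] with y hy
    obtain ⟨z, hz, hzy⟩ := exists_lt_of_csInf_lt hne hy
    exact hz.trans (monotone_cdf ν hzy.le)
  rw [quantile, if_pos ht]
  exact ⟨fun h => hmem.trans (monotone_cdf ν h), fun h => csInf_le hbdd h⟩

theorem monotoneOn_quantile : MonotoneOn (quantile ν) (Ioo 0 1) := fun _ hs _ ht hst =>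
  (quantile_le_iff ν hs _).2 (hst.trans ((quantile_le_iff ν ht _).1 le_rfl))

theorem measurable_quantile : Measurable (quantile ν) := by
  refine measurable_of_restrict_of_restrict_compl
    (measurableSet_Ioo (a := (0 : ℝ)) (b := 1)) ?_ ?_
  · exact Monotone.measurable fun s t hst => monotoneOn_quantile ν s.2 t.2 hst
  · have : (Ioo (0 : ℝ) 1)ᶜ.domRestrict (quantile ν) = fun _ => 0 := funext fun t => if_neg t.2
    rw [this]
    exact measurable_const

variable [IsProbabilityMeasure ν]

theorem map_quantile : (volume.restrict (Ioo 0 1)).map (quantile ν) = ν := by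
  refine (Measure.ext_of_Iic ν _ fun x => ?_).symm
  have h_pre : quantile ν ⁻¹' Iic x ∩ Ioo 0 1 = Iic (cdf ν x) ∩ Ioo 0 1 := by
    ext t
    simp only [mem_inter_iff, mem_preimage, mem_Iic]
    exact and_congr_left (quantile_le_iff ν · x)
  rw [Measure.map_apply (measurable_quantile ν) measurableSet_Iic,
    Measure.restrict_apply (measurable_quantile ν measurableSet_Iic), h_pre, ← ofReal_cdf]
  apply le_antisymm
  · calc ENNReal.ofReal (cdf ν x) = volume (Ioo 0 (cdf ν x)) := by simp
      _ ≤ volume (Iic (cdf ν x) ∩ Ioo 0 1) := measure_mono fun t ht =>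
          ⟨ht.2.le, ht.1, ht.2.trans_le (cdf_le_one ν x)⟩
  · calc volume (Iic (cdf ν x) ∩ Ioo 0 1) ≤ volume (Ioc 0 (cdf ν x)) :=
          measure_mono fun t ht => ⟨ht.2.1, ht.1⟩
      _ = ENNReal.ofReal (cdf ν x) := by simp

variable [NullSingletonClass ν]

theorem continuous_cdf : Continuous (cdf ν) := by
  refine continuous_iff_continuousAt.2 fun x =>
    (monotone_cdf ν).continuousAt_iff_leftLim_eq_rightLim.2 ?_
  have h := (cdf ν).measure_singleton x
  rw [measure_cdf, measure_singleton, eq_comm, ENNReal.ofReal_eq_zero, sub_nonpos] at h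
  rw [StieltjesFunction.rightLim_eq]
  exact le_antisymm ((monotone_cdf ν).leftLim_le le_rfl) h

theorem cdf_quantile {t : ℝ} (ht : t ∈ Ioo 0 1) : cdf ν (quantile ν t) = t := by
  obtain ⟨a, ha⟩ := ((tendsto_cdf_atBot ν).eventually (eventually_lt_nhds ht.1)).exists
  obtain ⟨b, hb⟩ := ((tendsto_cdf_atTop ν).eventually (eventually_gt_nhds ht.2)).exists
  obtain ⟨y, hy⟩ := intermediate_value_univ a b (continuous_cdf ν) ⟨ha.le, hb.le⟩
  refine le_antisymm ?_ ((quantile_le_iff ν ht _).1 le_rfl)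
  calc cdf ν (quantile ν t) ≤ cdf ν y := monotone_cdf ν ((quantile_le_iff ν ht y).2 hy.ge)
    _ = t := hy

theorem cdf_comp_quantile_ae : cdf ν ∘ quantile ν =ᵐ[volume.restrict (Ioo 0 1)] id := by
  filter_upwards [ae_restrict_mem measurableSet_Ioo] with t ht using cdf_quantile ν ht

theorem quantile_comp_cdf_ae : quantile ν ∘ cdf ν =ᵐ[ν] id := by
  have h_meas : MeasurableSet {x | quantile ν (cdf ν x) = x} :=
    measurableSet_eq_fun ((measurable_quantile ν).comp (monotone_cdf ν).measurable) measurable_id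
  have h := (ae_map_iff (measurable_quantile ν).aemeasurable h_meas).2 <| by
    filter_upwards [ae_restrict_mem (μ := volume) measurableSet_Ioo] with t ht
    rw [cdf_quantile ν ht]
  rwa [map_quantile] at h

theorem measurePreserving_cdf : MeasurePreserving (cdf ν) ν (volume.restrict (Ioo 0 1)) := by
  refine ⟨(monotone_cdf ν).measurable, ?_⟩
  calc ν.map (cdf ν) = ((volume.restrict (Ioo 0 1)).map (quantile ν)).map (cdf ν) := by
        rw [map_quantile]
    _ = volume.restrict (Ioo 0 1) := by
        rw [Measure.map_map (monotone_cdf ν).measurable (measurable_quantile ν),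
          Measure.map_congr (cdf_comp_quantile_ae ν), Measure.map_id]

theorem exists_isNontrivialInvolution_real : ∃ σ : ℝ → ℝ, IsNontrivialInvolution ν σ :=
  ⟨_, isNontrivialInvolution_one_sub.conj (measurePreserving_cdf ν) (measurable_quantile ν)
    (quantile_comp_cdf_ae ν) (cdf_comp_quantile_ae ν)⟩

end ProbabilityTheory

namespace MeasureTheory

variable {X : Type*} [MeasurableSpace X]

theorem exists_isNontrivialInvolution_of_isProbabilityMeasure [StandardBorelSpace X]
    (μ : Measure X) [IsProbabilityMeasure μ] [NullSingletonClass μ] :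
    ∃ σ : X → X, IsNontrivialInvolution μ σ := by
  have hX : ¬ Countable X := fun _ => by simpa using countable_univ.measure_zero μ
  let e : X ≃ᵐ ℝ := PolishSpace.measurableEquivOfNotCountable hX
    (fun h => Cardinal.not_countable_real (countable_univ_iff.2 h))
  have : IsProbabilityMeasure (μ.map e) :=
    Measure.isProbabilityMeasure_map e.measurable.aemeasurable
  have : NullSingletonClass (μ.map e) := ⟨fun y => by
    rw [e.map_apply]
    exact (subsingleton_singleton.preimage e.injective).measure_zero μ⟩
  obtain ⟨τ, hτ⟩ := exists_isNontrivialInvolution_real (μ.map e)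
  exact ⟨_, hτ.conj (e.measurable.measurePreserving μ) e.symm.measurable
    (.of_eq e.symm_comp_self) (.of_eq e.self_comp_symm)⟩

theorem exists_isNontrivialInvolution_of_nullSingletonClass [StandardBorelSpace X]
    (μ : Measure X) [IsFiniteMeasure μ] [NeZero μ] [NullSingletonClass μ] :
    ∃ σ : X → X, IsNontrivialInvolution μ σ := by
  have : NullSingletonClass ((μ univ)⁻¹ • μ) := ⟨fun x => by simp⟩
  obtain ⟨σ, hσ⟩ := exists_isNontrivialInvolution_of_isProbabilityMeasure ((μ univ)⁻¹ • μ)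
  have hμ : μ univ • (μ univ)⁻¹ • μ = μ := by
    rw [smul_smul, ENNReal.mul_inv_cancel (NeZero.ne _) (measure_ne_top _ _), one_smul]
  exact ⟨σ, hμ ▸ hσ.smul (NeZero.ne _)⟩

theorem measure_setOf_measure_singleton_ne_zero_le_tsum [MeasurableSingletonClass X]
    (μ : Measure X) : μ {x | μ {x} ≠ 0} ≤ ∑' x, μ {x} := by
  by_cases h : ∑' x, μ {x} = ∞
  · simp [h]
  have hA : {x | μ {x} ≠ 0}.Countable := Summable.countable_support_ennreal h
  calc μ {x | μ {x} ≠ 0} = μ (⋃ x ∈ {x | μ {x} ≠ 0}, {x}) := by rw [biUnion_of_singleton]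
    _ ≤ ∑' x : {x | μ {x} ≠ 0}, μ {(x : X)} := measure_biUnion_le μ hA _
    _ ≤ ∑' x, μ {x} := ENNReal.tsum_comp_le_tsum_of_injective Subtype.val_injective _

theorem nullSingletonClass_restrict_compl_setOf_measure_singleton_ne_zero
    [MeasurableSingletonClass X] (μ : Measure X) :
    NullSingletonClass (μ.restrict {x | μ {x} ≠ 0}ᶜ) := by
  refine ⟨fun x => ?_⟩
  by_cases hx : μ {x} = 0
  · exact le_antisymm ((Measure.restrict_apply_le _ _).trans hx.le) zero_le
  · rw [Measure.restrict_apply (measurableSet_singleton x),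
      singleton_inter_eq_empty.2 (by simpa using hx), measure_empty]

end MeasureTheory

/-- Existence of nontrivial automorphisms: a probability measure on a standard
Borel space which is not purely atomic admits a nontrivial probability space
automorphism. -/
theorem exists_nontrivial_automorphism_of_not_purely_atomic
    {X : Type*} [MeasurableSpace X] [StandardBorelSpace X]
    (μ : Measure X) [IsProbabilityMeasure μ]
    (hatoms : (∑' x : X, μ {x}) < 1) :
    ∃ φ ψ : X → X, Measurable φ ∧ Measurable ψ ∧
      μ.map φ = μ ∧ ψ ∘ φ =ᵐ[μ] id ∧ φ ∘ ψ =ᵐ[μ] id ∧ ¬ (φ =ᵐ[μ] id) := by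
  classical
  set A := {x : X | μ {x} ≠ 0}
  have hA : MeasurableSet A :=
    (Summable.countable_support_ennreal (ne_top_of_lt hatoms)).measurableSet
  have : NeZero (μ.restrict Aᶜ) := ⟨by
    rw [Ne, Measure.restrict_eq_zero, prob_compl_eq_one_sub hA, tsub_eq_zero_iff_le, not_le]
    exact (measure_setOf_measure_singleton_ne_zero_le_tsum μ).trans_lt hatoms⟩
  have := nullSingletonClass_restrict_compl_setOf_measure_singleton_ne_zero μ
  obtain ⟨σ, hσ⟩ := exists_isNontrivialInvolution_of_nullSingletonClass (μ.restrict Aᶜ)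
  have hφ := hσ.piecewise_id hA
  exact ⟨_, _, hφ.measurePreserving.measurable, hφ.measurePreserving.measurable,
    hφ.measurePreserving.map_eq, hφ.ae_involutive, hφ.ae_involutive, hφ.not_ae_eq_id⟩
end
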